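/- arXiv:2409.06068 — 5 statements merged into one kernel-verified Lean document; each statement's English description precedes it below -/
import Mathlib

section
/- Let r₁, r₂ be nonzero points in ℝ² with angle θ ∈ (π/3, π/2) between them at the origin, and set t = |r₂|/|r₁|. Then |r₁ - r₂| > max(|r₁|, |r₂|) if and only if 2 cos θ < t < 1/(2 cos θ). -/
open Real InnerProductGeometry

section

variable {V : Type*} [NormedAddCommGroup V] [InnerProductSpace ℝ V]

/-- By the law of cosines, `‖x - y‖² - ‖x‖² = ‖y‖ (‖y‖ - 2 ‖x‖ cos ∠(x, y))`. -/
theorem norm_lt_norm_sub_iff {x y : V} (hy : y ≠ 0) :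
    ‖x‖ < ‖x - y‖ ↔ 2 * cos (angle x y) * ‖x‖ < ‖y‖ := by
  rw [← sq_lt_sq₀ (norm_nonneg _) (norm_nonneg _), norm_sub_sq_real,
    ← cos_angle_mul_norm_mul_norm]
  calc _ ↔ 2 * cos (angle x y) * ‖x‖ * ‖y‖ < ‖y‖ * ‖y‖ := by
        constructor <;> intro h <;> linarith
    _ ↔ _ := mul_lt_mul_iff_left₀ (norm_pos_iff.2 hy)

theorem norm_lt_norm_sub_iff' {x y : V} (hx : x ≠ 0) :
    ‖y‖ < ‖x - y‖ ↔ 2 * cos (angle x y) * ‖y‖ < ‖x‖ := by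
  rw [norm_sub_rev, angle_comm]
  exact norm_lt_norm_sub_iff hx

end

/-- For nonzero planar points with angle `θ ∈ (π/3, π/2)` between them and
`t = ‖r₂‖/‖r₁‖`, the two points are strictly closer to the origin than to each
other iff `2 cos θ < t < 1/(2 cos θ)`. -/
theorem closer_iff_ratio_mem
    (r₁ r₂ : EuclideanSpace ℝ (Fin 2)) (h₁ : r₁ ≠ 0) (h₂ : r₂ ≠ 0)
    (θ t : ℝ) (hθ : θ = InnerProductGeometry.angle r₁ r₂)
    (hθI : θ ∈ Set.Ioo (π / 3) (π / 2)) (ht : t = ‖r₂‖ / ‖r₁‖) :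
    ‖r₁ - r₂‖ > max ‖r₁‖ ‖r₂‖ ↔ 2 * cos θ < t ∧ t < 1 / (2 * cos θ) := by
  have hcos : 0 < 2 * cos θ :=
    mul_pos two_pos (cos_pos_of_mem_Ioo ⟨by linarith [hθI.1, pi_pos], hθI.2⟩)
  rw [gt_iff_lt, max_lt_iff, norm_lt_norm_sub_iff h₂, norm_lt_norm_sub_iff' h₁, ← hθ, ht,
    lt_div_iff₀ (norm_pos_iff.2 h₁), div_lt_div_iff₀ (norm_pos_iff.2 h₁) hcos, one_mul,
    mul_comm ‖r₂‖]
end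

section
/- If r₁, r₂ ∈ ℝ² are nonzero and strictly closer to the origin than to each other, with θ the angle between them and t = |r₂|/|r₁|, then 2 cos θ < min(t, 1/t). Consequently θ > π/3, and if additionally θ < π/2 then 2 cos θ < t < 1/(2 cos θ). -/
/-!
Expanding `‖x - y‖² = ‖x‖² - 2⟪x, y⟫ + ‖y‖²`, the hypothesis `‖x‖ < ‖x - y‖` says exactly
`2⟪x, y⟫ < ‖y‖²`, i.e. `2 cos θ · ‖x‖ ‖y‖ < ‖y‖²`, i.e. `2 cos θ < ‖y‖ / ‖x‖`. Applying this with
the roles of the two points exchanged gives the bound by `1 / t`. Since `min t (1 / t) ≤ 1`,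
`cos θ < 1 / 2`, so `θ > π / 3`; for acute `θ` the bound `2 cos θ < 1 / t` inverts to
`t < 1 / (2 cos θ)`.
-/

open Real InnerProductGeometry

theorem ne_zero_of_norm_lt_norm_sub {E : Type*} [SeminormedAddGroup E] {x y : E}
    (h : ‖x‖ < ‖x - y‖) : y ≠ 0 := by
  rintro rfl
  simp at h

section InnerProductSpace

variable {E : Type*} [NormedAddCommGroup E] [InnerProductSpace ℝ E] {x y : E}

theorem two_mul_inner_lt_sq_of_norm_lt_norm_sub (h : ‖x‖ < ‖x - y‖) :
    2 * inner ℝ x y < ‖y‖ ^ 2 := by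
  have hsq : ‖x‖ ^ 2 < ‖x - y‖ ^ 2 := by gcongr
  rw [norm_sub_sq_real] at hsq
  linarith

theorem two_mul_cos_angle_lt_norm_div_norm_of_norm_lt_norm_sub (hx : x ≠ 0)
    (h : ‖x‖ < ‖x - y‖) : 2 * cos (angle x y) < ‖y‖ / ‖x‖ := by
  have hx' : 0 < ‖x‖ := norm_pos_iff.mpr hx
  have hy' : 0 < ‖y‖ := norm_pos_iff.mpr (ne_zero_of_norm_lt_norm_sub h)
  have key : 2 * cos (angle x y) * (‖x‖ * ‖y‖) < ‖y‖ * ‖y‖ := by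
    rw [mul_assoc, cos_angle_mul_norm_mul_norm, ← sq]
    exact two_mul_inner_lt_sq_of_norm_lt_norm_sub h
  rw [lt_div_iff₀ hx']
  nlinarith

end InnerProductSpace

theorem min_one_div_le_one (t : ℝ) : min t (1 / t) ≤ 1 := by
  rcases le_total t 1 with ht | ht
  · exact (min_le_left _ _).trans ht
  · exact (min_le_right _ _).trans (div_le_one_of_le₀ ht (by linarith))

theorem pi_div_three_lt_of_cos_lt_half {θ : ℝ} (hθ : 0 ≤ θ) (hcos : cos θ < 1 / 2) :
    π / 3 < θ := by
  by_contra! hle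
  have := cos_le_cos_of_nonneg_of_le_pi hθ (by linarith [pi_pos]) hle
  rw [cos_pi_div_three] at this
  linarith

theorem ratio_bounds_of_closer_general
    (r₁ r₂ : EuclideanSpace ℝ (Fin 2))
    (θ t : ℝ) (hθ : θ = InnerProductGeometry.angle r₁ r₂) (ht : t = ‖r₂‖ / ‖r₁‖)
    (h : ‖r₁ - r₂‖ > max ‖r₁‖ ‖r₂‖) :
    2 * cos θ < min t (1 / t) ∧ θ > π / 3 ∧
      (θ < π / 2 → 2 * cos θ < t ∧ t < 1 / (2 * cos θ)) := by
  have h₁₂ : ‖r₁‖ < ‖r₁ - r₂‖ := (le_max_left _ _).trans_lt h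
  have h₂₁ : ‖r₂‖ < ‖r₂ - r₁‖ := norm_sub_rev r₁ r₂ ▸ (le_max_right _ _).trans_lt h
  have hr₁ : r₁ ≠ 0 := ne_zero_of_norm_lt_norm_sub h₂₁
  have hr₂ : r₂ ≠ 0 := ne_zero_of_norm_lt_norm_sub h₁₂
  have hlt_t : 2 * cos θ < t := by
    rw [hθ, ht]
    exact two_mul_cos_angle_lt_norm_div_norm_of_norm_lt_norm_sub hr₁ h₁₂
  have hlt_inv : 2 * cos θ < 1 / t := by
    rw [hθ, ht, one_div_div, angle_comm]
    exact two_mul_cos_angle_lt_norm_div_norm_of_norm_lt_norm_sub hr₂ h₂₁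
  have hmin : 2 * cos θ < min t (1 / t) := lt_min hlt_t hlt_inv
  have hθ₀ : 0 ≤ θ := hθ ▸ angle_nonneg r₁ r₂
  refine ⟨hmin, pi_div_three_lt_of_cos_lt_half hθ₀ (by linarith [min_one_div_le_one t]),
    fun hacute => ⟨hlt_t, ?_⟩⟩
  have hcos : 0 < 2 * cos θ := by
    linarith [cos_pos_of_mem_Ioo ⟨by linarith [pi_pos], hacute⟩]
  have ht₀ : 0 < t := by rw [ht]; positivity
  exact (lt_one_div hcos ht₀).mp hlt_inv

/-- If two nonzero planar points are strictly closer to the origin than to each other,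
with `θ` the angle between them and `t = ‖r₂‖/‖r₁‖`, then `2 cos θ < min t (1/t)`;
consequently `θ > π/3`, and if moreover `θ < π/2` then `2cos θ < t < 1/(2cos θ)`. -/
theorem ratio_bounds_of_closer
    (r₁ r₂ : EuclideanSpace ℝ (Fin 2)) (h₁ : r₁ ≠ 0) (h₂ : r₂ ≠ 0)
    (θ t : ℝ) (hθ : θ = InnerProductGeometry.angle r₁ r₂) (ht : t = ‖r₂‖ / ‖r₁‖)
    (h : ‖r₁ - r₂‖ > max ‖r₁‖ ‖r₂‖) :
    2 * cos θ < min t (1 / t) ∧ θ > π / 3 ∧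
      (θ < π / 2 → 2 * cos θ < t ∧ t < 1 / (2 * cos θ)) :=
  ratio_bounds_of_closer_general r₁ r₂ θ t hθ ht h
end

section
/- The Jacobian determinant of the map F(θ, θ₁, …, θ_{n−1}, r, t₁, …, t_{n−1}) = (r₁, …, rₙ) ∈ (ℝ²)ⁿ, where rᵢ = (ρᵢ cos φᵢ, ρᵢ sin φᵢ) with φᵢ = θ + Σ_{k<i} θₖ and ρᵢ = r ∏_{k<i} tₖ, has absolute value r^{2n−1} · t₁^{2n−3} · t₂^{2n−5} ⋯ t_{n−2}³ · t_{n−1}. -/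
open Real Finset

/-!
Write `φ_i`, `ρ_i` for the angle and radius of the `i`-th point. The map is the composite of
`(θ, θ₁, …, r, t₁, …) ↦ (φ_i, ρ_i)_i` with polar coordinates in each of the `n` planes. Ordering
rows by (Cartesian coordinate, point) and columns by (angles, radii), its Jacobian matrix is thus
the product of the block-diagonal matrix of the `n` polar Jacobians, of determinants `-ρ_i`, with
a block-diagonal matrix whose blocks `∂φ_i/∂θ_k` and `∂ρ_i/∂t_k` are lower triangular with
diagonals `1` and `∏_{k<i} t_k`. Hence `|J| = ∏_i ρ_i ∏_{k<i} t_k`, in which `t_k` (with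
`t_0 = r`) occurs `(n - k) + (n - k - 1)` times.
-/

noncomputable section

namespace TaoWu

open Matrix

@[to_additive]
lemma prod_range_succ_eq_mul_prod_Icc {M : Type*} [CommMonoid M] (f : ℕ → M) (i : ℕ) :
    ∏ k ∈ range (i + 1), f k = f 0 * ∏ k ∈ Icc 1 i, f k := by
  rw [Nat.range_succ_eq_Icc_zero, ← insert_Icc_add_one_left_eq_Icc i.zero_le,
    prod_insert (by simp), zero_add]

lemma prod_range_prod_range_eq_prod_pow {M : Type*} [CommMonoid M] (t : ℕ → M) (n : ℕ) :
    ∏ i ∈ range n, ∏ k ∈ range i, t k = ∏ k ∈ range n, t k ^ (n - 1 - k) := by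
  rw [prod_comm' (t' := range n) (s' := fun k => Ioo k n)
    (by intro i k; simp only [mem_range, mem_Ioo]; omega)]
  exact prod_congr rfl fun k _ => by rw [prod_const, Nat.card_Ioo]; congr 1; omega

lemma prod_range_prod_range_succ_mul_eq_prod_pow {M : Type*} [CommMonoid M] (t : ℕ → M)
    (n : ℕ) :
    ∏ i ∈ range n, ((∏ k ∈ range (i + 1), t k) * ∏ k ∈ range i, t k) =
      ∏ k ∈ range n, t k ^ (2 * (n - k) - 1) := by
  simp_rw [prod_range_succ, mul_right_comm _ (t _), ← sq, prod_mul_distrib, prod_pow,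
    prod_range_prod_range_eq_prod_pow, ← prod_pow, ← pow_mul, ← prod_mul_distrib, ← pow_succ]
  exact prod_congr rfl fun k hk => by rw [mem_range] at hk; congr 1; omega

lemma det_of_ite_le {R m : Type*} [CommRing R] [Fintype m] [DecidableEq m] [LinearOrder m]
    (f : m → m → R) : (of fun i k => if k ≤ i then f i k else 0).det = ∏ i, f i i := by
  rw [det_of_isLowerTriangular (of fun i k : m => if k ≤ i then f i k else 0)
    fun i k (hik : i < k) => if_neg (not_le.2 hik)]
  simp

def natProj (m k : ℕ) : (Fin m → ℝ) →L[ℝ] ℝ :=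
  if h : k < m then ContinuousLinearMap.proj ⟨k, h⟩ else 0

lemma natProj_apply (m k : ℕ) (v : Fin m → ℝ) :
    natProj m k v = if h : k < m then v ⟨k, h⟩ else 0 := by
  unfold natProj; split_ifs <;> rfl

lemma natProj_single (m k : ℕ) (l : Fin m) :
    natProj m k (Pi.single l 1) = if k = l then 1 else 0 := by
  by_cases hk : k < m
  · rw [natProj_apply, dif_pos hk, Pi.single_apply]
    simp only [Fin.ext_iff]
  · rw [natProj_apply, dif_neg hk, if_neg fun (h : k = l) => hk (h ▸ l.isLt)]

def polarCart (s : ℕ) (φ ρ : ℝ) : ℝ := if s = 0 then ρ * cos φ else ρ * sin φ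

def polarJacobian (φ ρ : ℝ) : Matrix (Fin 2) (Fin 2) ℝ :=
  !![-(ρ * sin φ), cos φ; ρ * cos φ, sin φ]

lemma det_polarJacobian (φ ρ : ℝ) : (polarJacobian φ ρ).det = -ρ := by
  rw [polarJacobian, det_fin_two_of]
  linear_combination (-ρ) * sin_sq_add_cos_sq φ

lemma _root_.HasFDerivAt.polarCart {E : Type*} [NormedAddCommGroup E] [NormedSpace ℝ E]
    {f g : E → ℝ} {f' g' : E →L[ℝ] ℝ} {x : E} (hf : HasFDerivAt f f' x)
    (hg : HasFDerivAt g g' x) (s : Fin 2) :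
    HasFDerivAt (fun v => polarCart s (f v) (g v))
      (polarJacobian (f x) (g x) s 0 • f' + polarJacobian (f x) (g x) s 1 • g') x := by
  obtain rfl | rfl : s = 0 ∨ s = 1 := by omega
  · refine (hg.mul hf.cos).congr_fderiv ?_
    ext v
    simp only [_root_.add_apply, _root_.smul_apply, smul_eq_mul, polarJacobian, of_apply,
      cons_val', cons_val_zero, cons_val_fin_one, cons_val_one]
    ring
  · refine (hg.mul hf.sin).congr_fderiv ?_
    ext v
    simp only [_root_.add_apply, _root_.smul_apply, smul_eq_mul, polarJacobian, of_apply,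
      cons_val', cons_val_zero, cons_val_fin_one, cons_val_one]
    ring

/- With `y k = θ_k` and `y (n + k) = t_k` (where `θ_0 = θ`, `t_0 = r`), `angle y i` and
`radius n y i` are the paper's `φ_{i+1}` and `ρ_{i+1}`. -/
def angle (y : ℕ → ℝ) (i : ℕ) : ℝ := ∑ k ∈ range (i + 1), y k

def radius (n : ℕ) (y : ℕ → ℝ) (i : ℕ) : ℝ := ∏ k ∈ range (i + 1), y (n + k)

def angleDeriv (m i : ℕ) : (Fin m → ℝ) →L[ℝ] ℝ := ∑ k ∈ range (i + 1), natProj m k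

def radiusDeriv (m n : ℕ) (y : ℕ → ℝ) (i : ℕ) : (Fin m → ℝ) →L[ℝ] ℝ :=
  ∑ k ∈ range (i + 1), (∏ j ∈ (range (i + 1)).erase k, y (n + j)) • natProj m (n + k)

lemma hasFDerivAt_angle {m : ℕ} (x : Fin m → ℝ) (i : ℕ) :
    HasFDerivAt (fun v => angle (natProj m · v) i) (angleDeriv m i) x := by
  have h : (fun v => angle (natProj m · v) i) = angleDeriv m i := by
    ext v; simp [angle, angleDeriv]
  exact h ▸ (angleDeriv m i).hasFDerivAt

lemma hasFDerivAt_radius {m : ℕ} (x : Fin m → ℝ) (n i : ℕ) :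
    HasFDerivAt (fun v => radius n (natProj m · v) i) (radiusDeriv m n (natProj m · x) i) x :=
  HasFDerivAt.finsetProd fun k _ => (natProj m (n + k)).hasFDerivAt

def angleJacobian (n : ℕ) : Matrix (Fin n) (Fin n) ℝ := of fun i k => if k ≤ i then 1 else 0

def radiusJacobian (n : ℕ) (y : ℕ → ℝ) : Matrix (Fin n) (Fin n) ℝ :=
  of fun i k => if k ≤ i then ∏ j ∈ (range (i + 1)).erase k, y (n + j) else 0

/- Columns are indexed through `finProdFinEquiv (t, k) = k + n * t`: the variable `θ_k` for
`t = 0` and `t_k` for `t = 1`. -/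
lemma angleDeriv_single {n : ℕ} (i : Fin n) (p : Fin 2 × Fin n) :
    angleDeriv (2 * n) i (Pi.single (finProdFinEquiv p) 1) =
      if p.1 = 0 then angleJacobian n i p.2 else 0 := by
  obtain ⟨t, k⟩ := p
  simp only [angleDeriv, _root_.sum_apply, natProj_single, finProdFinEquiv_apply_val,
    sum_ite_eq', mem_range, angleJacobian, of_apply]
  obtain rfl | rfl : t = 0 ∨ t = 1 := by omega
  · simp only [Fin.val_zero, mul_zero, add_zero, if_true, Nat.lt_succ_iff, Fin.le_def]
  · have := i.isLt
    simp only [one_ne_zero, if_false, ite_eq_right_iff]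
    omega

lemma radiusDeriv_single {n : ℕ} (y : ℕ → ℝ) (i : Fin n) (p : Fin 2 × Fin n) :
    radiusDeriv (2 * n) n y i (Pi.single (finProdFinEquiv p) 1) =
      if p.1 = 1 then radiusJacobian n y i p.2 else 0 := by
  obtain ⟨t, k⟩ := p
  simp only [radiusDeriv, _root_.sum_apply, _root_.smul_apply, natProj_single,
    finProdFinEquiv_apply_val, smul_eq_mul, mul_ite, mul_one, mul_zero, radiusJacobian, of_apply]
  obtain rfl | rfl : t = 0 ∨ t = 1 := by omega
  · refine sum_eq_zero fun j _ => if_neg ?_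
    have := k.isLt
    simp only [Fin.val_zero]
    omega
  · simp only [Fin.val_one, mul_one, add_comm _ n, Nat.add_left_cancel_iff, sum_ite_eq',
      mem_range, if_true, Nat.lt_succ_iff, Fin.le_def]

def taoWuMap (n : ℕ) (v : Fin (2 * n) → ℝ) (j : Fin (2 * n)) : ℝ :=
  polarCart (j % 2) (angle (natProj (2 * n) · v) (j / 2))
    (radius n (natProj (2 * n) · v) (j / 2))

def rowEquiv (n : ℕ) : Fin 2 × Fin n ≃ Fin (2 * n) :=
  (Equiv.prodComm _ _).trans (finProdFinEquiv.trans (finCongr (Nat.mul_comm n 2)))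

lemma rowEquiv_apply_val (n : ℕ) (p : Fin 2 × Fin n) : (rowEquiv n p : ℕ) = p.1 + 2 * p.2 := by
  simp [rowEquiv]

def componentDeriv {n : ℕ} (y : ℕ → ℝ) (p : Fin 2 × Fin n) : (Fin (2 * n) → ℝ) →L[ℝ] ℝ :=
  polarJacobian (angle y p.2) (radius n y p.2) p.1 0 • angleDeriv (2 * n) p.2 +
    polarJacobian (angle y p.2) (radius n y p.2) p.1 1 • radiusDeriv (2 * n) n y p.2

lemma hasFDerivAt_taoWuMap {n : ℕ} (x : Fin (2 * n) → ℝ) :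
    HasFDerivAt (taoWuMap n)
      (ContinuousLinearMap.pi fun j =>
        componentDeriv (natProj (2 * n) · x) ((rowEquiv n).symm j)) x := by
  refine hasFDerivAt_pi.2 fun j => ?_
  obtain ⟨⟨s, i⟩, rfl⟩ := (rowEquiv n).surjective j
  have hdiv : (rowEquiv n (s, i) : ℕ) / 2 = i := by simp only [rowEquiv_apply_val]; omega
  have hmod : (rowEquiv n (s, i) : ℕ) % 2 = s := by simp only [rowEquiv_apply_val]; omega
  simp only [taoWuMap, hdiv, hmod, Equiv.symm_apply_apply]
  exact (hasFDerivAt_angle x i).polarCart (hasFDerivAt_radius x n i) s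

lemma toMatrix'_fderiv_taoWuMap {n : ℕ} (x : Fin (2 * n) → ℝ) :
    letI y : ℕ → ℝ := (natProj (2 * n) · x)
    (LinearMap.toMatrix' (fderiv ℝ (taoWuMap n) x : (Fin (2 * n) → ℝ) →ₗ[ℝ] _)).submatrix
        (rowEquiv n) finProdFinEquiv =
      blockDiagonal (fun i : Fin n => polarJacobian (angle y i) (radius n y i)) *
        reindex (Equiv.prodComm _ _) (Equiv.prodComm _ _)
          (blockDiagonal ![angleJacobian n, radiusJacobian n y]) := by
  ext ⟨s, i⟩ ⟨t, k⟩
  rw [(hasFDerivAt_taoWuMap x).fderiv]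
  simp only [submatrix_apply, LinearMap.toMatrix'_apply, ContinuousLinearMap.coe_coe,
    ContinuousLinearMap.pi_apply, Equiv.symm_apply_apply, componentDeriv, _root_.add_apply,
    _root_.smul_apply, smul_eq_mul, angleDeriv_single, radiusDeriv_single, mul_apply,
    Fintype.sum_prod_type, blockDiagonal_apply, reindex_apply, Equiv.prodComm_symm,
    Equiv.prodComm_apply, Prod.swap_prod_mk, ite_mul, zero_mul, sum_ite_eq, mem_univ, if_true,
    Fin.sum_univ_two]
  rcases (by omega : t = 0 ∨ t = 1) with rfl | rfl <;> simp

lemma abs_det_fderiv_taoWuMap {n : ℕ} (x : Fin (2 * n) → ℝ) :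
    letI y : ℕ → ℝ := (natProj (2 * n) · x)
    |(fderiv ℝ (taoWuMap n) x).det| =
      |∏ i ∈ range n, (radius n y i * ∏ k ∈ range i, y (n + k))| := by
  rw [ContinuousLinearMap.det, ← LinearMap.det_toMatrix',
    ← abs_det_submatrix_equiv_equiv (rowEquiv n) finProdFinEquiv, toMatrix'_fderiv_taoWuMap,
    det_mul, det_blockDiagonal, det_reindex_self, det_blockDiagonal, Fin.prod_univ_two]
  simp only [det_polarJacobian, Matrix.cons_val_zero, Matrix.cons_val_one, angleJacobian,
    radiusJacobian, det_of_ite_le, prod_const_one, one_mul, prod_neg, range_add_one,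
    erase_insert notMem_range_self]
  rw [mul_assoc, abs_mul, abs_pow, abs_neg, abs_one, one_pow, one_mul, ← prod_mul_distrib,
    Fin.prod_univ_eq_prod_range (fun i => radius n (natProj (2 * n) · x) i *
      ∏ k ∈ range i, natProj (2 * n) (n + k) x)]

end TaoWu

end

/-- The Jacobian determinant of the Tao–Wu change of variables
`F(θ, θ₁, …, θ_{n−1}, r, t₁, …, t_{n−1}) = (r₁, …, rₙ)`, where
`rᵢ = (ρᵢ cos φᵢ, ρᵢ sin φᵢ)` with `φᵢ = θ + Σ_{k<i} θₖ` and `ρᵢ = r ∏_{k<i} tₖ`,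
has absolute value `r^{2n−1} t₁^{2n−3} t₂^{2n−5} ⋯ t_{n−2}³ t_{n−1}`.
Coordinates on the domain: `x 0 = θ`, `x k = θₖ` for `1 ≤ k ≤ n−1`, `x n = r`,
`x (n+k) = tₖ` for `1 ≤ k ≤ n−1`; on the target, coordinates `2i, 2i+1` are the
Cartesian coordinates of `r_{i+1}`. -/
theorem taoWu_jacobian (n : ℕ) (hn : 1 ≤ n)
    (F : (Fin (2 * n) → ℝ) → (Fin (2 * n) → ℝ))
    (hF : F = fun (x : Fin (2 * n) → ℝ) (j : Fin (2 * n)) =>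
      let y : ℕ → ℝ := fun k => if h : k < 2 * n then x ⟨k, h⟩ else 0
      let i : ℕ := (j : ℕ) / 2
      let φ : ℝ := y 0 + ∑ k ∈ Finset.Icc 1 i, y k
      let ρ : ℝ := y n * ∏ k ∈ Finset.Icc 1 i, y (n + k)
      if (j : ℕ) % 2 = 0 then ρ * cos φ else ρ * sin φ)
    (x : Fin (2 * n) → ℝ)
    (y : ℕ → ℝ) (hy : y = fun k => if h : k < 2 * n then x ⟨k, h⟩ else 0)
    (hr : 0 < y n) (ht : ∀ k ∈ Finset.Icc 1 (n - 1), 0 < y (n + k)) :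
    |(fderiv ℝ F x).det| =
      y n ^ (2 * n - 1) * ∏ k ∈ Finset.Icc 1 (n - 1), y (n + k) ^ (2 * (n - k) - 1) := by
  have hF' : F = TaoWu.taoWuMap n := by
    subst hF
    funext v j
    simp only [TaoWu.taoWuMap, TaoWu.polarCart, TaoWu.angle, TaoWu.radius, TaoWu.natProj_apply,
      TaoWu.sum_range_succ_eq_add_sum_Icc, TaoWu.prod_range_succ_eq_mul_prod_Icc, add_zero]
  have hy' : (TaoWu.natProj (2 * n) · x) = y := by
    subst hy
    exact funext fun k => TaoWu.natProj_apply _ k x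
  have hpos : ∀ k ∈ range n, 0 < y (n + k) := by
    intro k hk
    rcases k.eq_zero_or_pos with rfl | hk0
    · exact hr
    · exact ht k (by simp only [mem_range, mem_Icc] at hk ⊢; omega)
  rw [hF', TaoWu.abs_det_fderiv_taoWuMap, hy']
  simp only [TaoWu.radius]
  rw [TaoWu.prod_range_prod_range_succ_mul_eq_prod_pow (fun k => y (n + k)),
    abs_of_pos (prod_pos fun k hk => pow_pos (hpos k hk) _), ← Nat.sub_add_cancel hn,
    TaoWu.prod_range_succ_eq_mul_prod_Icc]
  simp
end

section
/- Let r₁, …, r₅ be the points in ℝ² where rᵢ has argument (i−1)·(2π/5) and magnitude (3/2)^{i−1}. Then r₅ fails to be strictly closer to the origin than to r₁: |r₅ − r₁| ≤ max(|r₅|, |r₁|). -/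
open Real

/-! By the law of cosines, `‖a e^{iθ} - 1‖² = a² - 2a cos θ + 1`, which is at most `a²` as soon as
`2a cos θ ≥ 1`. Here `a = (3/2)⁴ = 81/16` and `θ = 8π/5`, so `cos θ = cos (2π/5) = (√5 - 1)/4 ≥ 1/4`,
and `2a cos θ ≥ 81/32 > 1`. -/

theorem Real.cos_two_pi_div_five : cos (2 * π / 5) = (√5 - 1) / 4 := by
  rw [show 2 * π / 5 = 2 * (π / 5) by ring, cos_two_mul, cos_pi_div_five]
  ring_nf
  rw [sq_sqrt (by norm_num)]
  ring

theorem Complex.norm_ofReal_mul_exp_sub_one_sq (a θ : ℝ) :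
    ‖(a : ℂ) * exp (θ * I) - 1‖ ^ 2 = a ^ 2 - 2 * a * Real.cos θ + 1 := by
  rw [Complex.sq_norm, normSq_apply, exp_mul_I]
  simp only [← ofReal_cos, ← ofReal_sin, sub_re, mul_re, ofReal_re, add_re, I_re, mul_zero,
    ofReal_im, I_im, mul_one, sub_self, add_zero, add_im, mul_im, zero_add, zero_mul, sub_zero,
    one_re, sub_im, one_im]
  linear_combination a ^ 2 * Real.sin_sq_add_cos_sq θ

theorem Complex.norm_ofReal_mul_exp_sub_one_le {a θ : ℝ} (ha : 0 ≤ a)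
    (h : 1 ≤ 2 * a * Real.cos θ) : ‖(a : ℂ) * exp (θ * I) - 1‖ ≤ a := by
  rw [← pow_le_pow_iff_left₀ (norm_nonneg _) ha two_ne_zero, norm_ofReal_mul_exp_sub_one_sq]
  linarith

/-- In the configuration where `rᵢ` has argument `(i−1)·(2π/5)` and magnitude
`(3/2)^{i−1}`, the fifth point fails to be strictly closer to the origin than to the
first: `|r₅ − r₁| ≤ max(|r₅|, |r₁|)`. -/
theorem taoWu_region_counterexample_one
    (r : Fin 5 → ℂ)
    (hr : r = fun i : Fin 5 => (((3 / 2 : ℝ) ^ (i : ℕ) : ℝ) : ℂ) *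
      Complex.exp ((((i : ℕ) * (2 * π / 5) : ℝ) : ℂ) * Complex.I)) :
    ‖r 4 - r 0‖ ≤ max ‖r 4‖ ‖r 0‖ := by
  have hr4 : r 4 = (((3 / 2) ^ 4 : ℝ) : ℂ) *
      Complex.exp (((4 * (2 * π / 5) : ℝ) : ℂ) * Complex.I) := by
    subst hr; rfl
  have hr0 : r 0 = 1 := by simp [hr]
  have hnorm4 : ‖r 4‖ = (3 / 2) ^ 4 := by
    rw [hr4, norm_mul, Complex.norm_exp_ofReal_mul_I]; norm_num
  have hcos : cos (4 * (2 * π / 5)) = (√5 - 1) / 4 := by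
    rw [show 4 * (2 * π / 5) = 2 * π - 2 * π / 5 by ring, cos_two_pi_sub, cos_two_pi_div_five]
  have hsqrt : (2 : ℝ) ≤ √5 := le_sqrt_of_sq_le (by norm_num)
  rw [hnorm4, hr0, hr4]
  refine le_max_of_le_left (Complex.norm_ofReal_mul_exp_sub_one_le (by norm_num) ?_)
  rw [hcos]
  linarith
end

section
/- Let r₁, …, rₙ ∈ ℝ² be nonzero points pairwise strictly closer to the origin than to each other, listed in counterclockwise order, and let θᵢ ∈ (0, 2π) be the angle from rᵢ to r_{i+1} (indices mod n, so Σθᵢ = 2π). If θᵢ ∈ (π/3, π/2) for some i, then the ratio tᵢ = |r_{i+1}|/|rᵢ| satisfies 2 cos θᵢ < tᵢ < 1/(2 cos θᵢ). -/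
open Real

/-!
Write `z (i + 1) = c * z i` with `c = t e^{iθ}`. By the law of cosines
`‖z (i + 1) - z i‖ ^ 2 = (t ^ 2 - 2 t cos θ + 1) ‖z i‖ ^ 2`, so `‖z i‖ < ‖z (i + 1) - z i‖` says
`t (t - 2 cos θ) > 0` and `‖z (i + 1)‖ < ‖z (i + 1) - z i‖` says `2 t cos θ < 1`.
The degenerate case `i + 1 = i` (`n = 1`) is excluded because a rotation with `sin θ ≠ 0` moves `z i`.
-/

lemma norm_ofReal_mul_exp_mul_I_sub_one_sq (t θ : ℝ) :
    ‖(t : ℂ) * Complex.exp (θ * Complex.I) - 1‖ ^ 2 = t ^ 2 - 2 * t * cos θ + 1 := by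
  rw [Complex.sq_norm, Complex.normSq_apply]
  simp only [Complex.sub_re, Complex.sub_im, Complex.re_ofReal_mul, Complex.im_ofReal_mul,
    Complex.exp_ofReal_mul_I_re, Complex.exp_ofReal_mul_I_im, Complex.one_re, Complex.one_im]
  linear_combination t ^ 2 * sin_sq_add_cos_sq θ

lemma ofReal_mul_exp_mul_I_ne_one {t θ : ℝ} (ht : t ≠ 0) (hθ : sin θ ≠ 0) :
    (t : ℂ) * Complex.exp (θ * Complex.I) ≠ 1 := by
  intro h
  have him := congrArg Complex.im h
  simp only [Complex.im_ofReal_mul, Complex.exp_ofReal_mul_I_im, Complex.one_im] at him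
  exact mul_ne_zero ht hθ him

lemma two_mul_cos_lt_of_one_lt_norm_sub_one {t θ : ℝ} (ht : 0 ≤ t)
    (h : 1 < ‖(t : ℂ) * Complex.exp (θ * Complex.I) - 1‖) : 2 * cos θ < t := by
  have hsq := pow_lt_pow_left₀ h zero_le_one two_ne_zero
  rw [one_pow, norm_ofReal_mul_exp_mul_I_sub_one_sq] at hsq
  nlinarith

lemma lt_inv_two_mul_cos_of_lt_norm_sub_one {t θ : ℝ} (ht : 0 ≤ t) (hcos : 0 < cos θ)
    (h : t < ‖(t : ℂ) * Complex.exp (θ * Complex.I) - 1‖) : t < 1 / (2 * cos θ) := by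
  have hsq := pow_lt_pow_left₀ h ht two_ne_zero
  rw [norm_ofReal_mul_exp_mul_I_sub_one_sq] at hsq
  rw [lt_div_iff₀ (by positivity)]
  linarith

theorem ratio_bounds_of_ccw_config_general (n : ℕ) [NeZero n] (z : Fin n → ℂ) (θ : Fin n → ℝ)
    (hz : ∀ i, z i ≠ 0)
    (hclose : ∀ i j, i ≠ j → ‖z i - z j‖ > max ‖z i‖ ‖z j‖)
    (hrot : ∀ i, z (i + 1) =
      (((‖z (i + 1)‖ / ‖z i‖ : ℝ) : ℂ) * Complex.exp ((θ i : ℂ) * Complex.I)) * z i)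
    (i : Fin n) (hi : θ i ∈ Set.Ioo (π / 3) (π / 2)) :
    2 * cos (θ i) < ‖z (i + 1)‖ / ‖z i‖ ∧ ‖z (i + 1)‖ / ‖z i‖ < 1 / (2 * cos (θ i)) := by
  have hθ_pos : 0 < θ i := by linarith [hi.1, pi_pos]
  have ha : 0 < ‖z i‖ := norm_pos_iff.mpr (hz i)
  set t := ‖z (i + 1)‖ / ‖z i‖
  set c := (t : ℂ) * Complex.exp (θ i * Complex.I)
  have ht : 0 < t := div_pos (norm_pos_iff.mpr (hz (i + 1))) ha
  have hb : ‖z (i + 1)‖ = t * ‖z i‖ := (div_mul_cancel₀ _ ha.ne').symm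
  have hc : c ≠ 1 := ofReal_mul_exp_mul_I_ne_one ht.ne'
    (sin_pos_of_pos_of_lt_pi hθ_pos (by linarith [hi.2, pi_pos])).ne'
  have hne : i + 1 ≠ i := by
    intro h
    have hfix : c * z i = 1 * z i := by rw [one_mul, ← hrot i, h]
    exact hc (mul_right_cancel₀ (hz i) hfix)
  have hsub : ‖z (i + 1) - z i‖ = ‖c - 1‖ * ‖z i‖ := by
    rw [hrot i, ← sub_one_mul, norm_mul]
  have hfar := hclose (i + 1) i hne
  rw [hsub, hb, gt_iff_lt, max_lt_iff] at hfar
  obtain ⟨hfar_next, hfar_self⟩ := hfar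
  have hcos : 0 < cos (θ i) := cos_pos_of_mem_Ioo ⟨by linarith [pi_pos], hi.2⟩
  exact ⟨two_mul_cos_lt_of_one_lt_norm_sub_one ht.le
      (lt_of_mul_lt_mul_right ((one_mul _).trans_lt hfar_self) ha.le),
    lt_inv_two_mul_cos_of_lt_norm_sub_one ht.le hcos (lt_of_mul_lt_mul_right hfar_next ha.le)⟩

/-- Let `z₁, …, zₙ` be nonzero planar points (identified with `ℂ`), pairwise strictly
closer to the origin than to each other, listed in counterclockwise order with angular
increments `θᵢ ∈ (0, 2π)` summing to `2π` (so that `z_{i+1}` is obtained from `zᵢ` by a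
counterclockwise rotation by `θᵢ` and a radial scaling). If `θᵢ ∈ (π/3, π/2)` then
`2 cos θᵢ < ‖z_{i+1}‖/‖zᵢ‖ < 1/(2 cos θᵢ)`. -/
theorem ratio_bounds_of_ccw_config (n : ℕ) [NeZero n] (z : Fin n → ℂ) (θ : Fin n → ℝ)
    (hz : ∀ i, z i ≠ 0)
    (hclose : ∀ i j, i ≠ j → ‖z i - z j‖ > max ‖z i‖ ‖z j‖)
    (hθ : ∀ i, θ i ∈ Set.Ioo 0 (2 * π))
    (hsum : ∑ i, θ i = 2 * π)
    (hrot : ∀ i, z (i + 1) =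
      (((‖z (i + 1)‖ / ‖z i‖ : ℝ) : ℂ) * Complex.exp ((θ i : ℂ) * Complex.I)) * z i)
    (i : Fin n) (hi : θ i ∈ Set.Ioo (π / 3) (π / 2)) :
    2 * cos (θ i) < ‖z (i + 1)‖ / ‖z i‖ ∧ ‖z (i + 1)‖ / ‖z i‖ < 1 / (2 * cos (θ i)) :=
  ratio_bounds_of_ccw_config_general n z θ hz hclose hrot i hi
end
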